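/- If G and H are Conway forms (affine games distinct from ∞ and ∞̄ with no checks among their followers), then G + (-G) = 0; in particular every Conway game is invertible with inverse its conjugate. -/
import Mathlib


inductive AGame : Type
  | inf : AGame
  | binf : AGame
  | node : List AGame → List AGame → AGame

namespace AGame

/-- The affine games: option sets are nonempty (hereditarily). -/
inductive Valid : AGame → Prop
  | inf : Valid .inf
  | binf : Valid .binf
  | node : ∀ {L R : List AGame}, L ≠ [] → R ≠ [] →
      (∀ g ∈ L, Valid g) → (∀ g ∈ R, Valid g) → Valid (.node L R)

/-- Total version of the disjunctive sum (value on the undefined cases `∞ + ∞̄` is junk). -/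
def add' : AGame → AGame → AGame
  | .inf, _ => .inf
  | _, .inf => .inf
  | .binf, _ => .binf
  | _, .binf => .binf
  | .node L R, .node L' R' =>
      .node ((L.attach.map fun x => add' x.1 (.node L' R')) ++
             (L'.attach.map fun y => add' (.node L R) y.1))
            ((R.attach.map fun x => add' x.1 (.node L' R')) ++
             (R'.attach.map fun y => add' (.node L R) y.1))
termination_by G H => sizeOf G + sizeOf H
decreasing_by
  all_goals
    simp_wf
    first
      | (have := List.sizeOf_lt_of_mem x.2; simp_all; omega)
      | (have := List.sizeOf_lt_of_mem y.2; simp_all; omega)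

/-- The disjunctive sum, undefined (`none`) exactly when adding `∞` to `∞̄`. -/
def add : AGame → AGame → Option AGame
  | .inf, .binf => none
  | .binf, .inf => none
  | G, H => some (add' G H)

mutual
/-- `o^L(G) = L` : Left, playing first, wins `G`. -/
def lf : AGame → Bool
  | .inf => true
  | .binf => false
  | .node L _ => L.attach.any fun x => ls x.1
termination_by G => sizeOf G
decreasing_by
  simp_wf; have := List.sizeOf_lt_of_mem x.2; simp_all; omega
/-- `o^R(G) = L` : Left, playing second, wins `G`. -/
def ls : AGame → Bool
  | .inf => true
  | .binf => false
  | .node _ R => R.attach.all fun x => lf x.1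
termination_by G => sizeOf G
decreasing_by
  simp_wf; have := List.sizeOf_lt_of_mem x.2; simp_all; omega
end

/-- The combined outcome `(o^L(G), o^R(G))`, encoded as a pair of booleans
(`true` = Left wins). `(true,true)` is 𝓛, `(true,false)` is 𝓝, `(false,true)` is 𝓟,
`(false,false)` is 𝓡. -/
def outcome (G : AGame) : Bool × Bool := (lf G, ls G)

/-- The partial order of outcomes (componentwise, 𝓛 maximal, 𝓡 minimal, 𝓝 ∥ 𝓟). -/
def OutLE (a b : Bool × Bool) : Prop :=
  (a.1 = true → b.1 = true) ∧ (a.2 = true → b.2 = true)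

/-- `G ≥ H` : replacing `H` by `G` never hurts Left in any disjunctive sum. -/
def GE (G H : AGame) : Prop :=
  ∀ X : AGame, Valid X → X ≠ .inf → X ≠ .binf →
    OutLE (outcome (add' H X)) (outcome (add' G X))

/-- Game equivalence. -/
def Equiv (G H : AGame) : Prop :=
  ∀ X : AGame, Valid X → X ≠ .inf → X ≠ .binf →
    outcome (add' G X) = outcome (add' H X)

/-- The zero game `{∞̄ | ∞}`. -/
def zero : AGame := .node [.binf] [.inf]

/-- The conjugate (players switch roles). -/
def neg : AGame → AGame
  | .inf => .binf
  | .binf => .inf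
  | .node L R =>
      .node (R.attach.map fun x => neg x.1) (L.attach.map fun x => neg x.1)
termination_by G => sizeOf G
decreasing_by
  all_goals
    simp_wf
    (have := List.sizeOf_lt_of_mem x.2; simp_all; omega)


/-- Left option set (empty list for the terminating games). -/
def leftOptions : AGame → List AGame
  | .node L _ => L
  | _ => []

/-- Right option set (empty list for the terminating games). -/
def rightOptions : AGame → List AGame
  | .node _ R => R
  | _ => []

/-- A check: a game having `∞` as a Left option or `∞̄` as a Right option. -/
def IsCheck : AGame → Prop
  | .node L R => .inf ∈ L ∨ .binf ∈ R
  | _ => False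

/-- `Follower H G` : `H` is a follower of `G` (i.e. `G` itself, an option of `G`,
an option of an option, and so on). -/
inductive Follower : AGame → AGame → Prop
  | refl (G : AGame) : Follower G G
  | left {H K : AGame} {L R : List AGame} : K ∈ L → Follower H K → Follower H (.node L R)
  | right {H K : AGame} {L R : List AGame} : K ∈ R → Follower H K → Follower H (.node L R)

/-- A Conway form: distinct from `∞` and `∞̄`, with no checks among its followers. -/
def ConwayForm (G : AGame) : Prop :=
  G ≠ .inf ∧ G ≠ .binf ∧ ∀ H, Follower H G → ¬ IsCheck H

/-- A Conway game: a game equivalent to some Conway form. -/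
def ConwayGame (G : AGame) : Prop :=
  ∃ G', Valid G' ∧ ConwayForm G' ∧ Equiv G G'

/-- `J` is invertible: `J + K = 0` (in the sense of game equivalence) for some affine `K`. -/
def Invertible (J : AGame) : Prop :=
  ∃ K, Valid K ∧ ∃ S, add J K = some S ∧ Equiv S zero

/-- Number forms: the images of the surreal-number Conway forms under the embedding
that replaces an empty option set by `{∞̄}` on the Left and by `{∞}` on the Right.
Every genuine Left option is strictly less than every genuine Right option, and
all genuine options are again number forms. -/
inductive NumForm : AGame → Prop
  | mk {L R : List AGame}
      (hL0 : L ≠ []) (hR0 : R ≠ [])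
      (hLb : .binf ∈ L → L = [.binf]) (hRi : .inf ∈ R → R = [.inf])
      (hLnum : ∀ x ∈ L, x ≠ .binf → NumForm x)
      (hRnum : ∀ y ∈ R, y ≠ .inf → NumForm y)
      (hlt : ∀ x ∈ L, ∀ y ∈ R, x ≠ .binf → y ≠ .inf → GE y x ∧ ¬ GE x y) :
      NumForm (.node L R)

/-- A number: an affine game equal to (the image of) a Conway number form. -/
def IsNumber (G : AGame) : Prop := ∃ n, Valid n ∧ NumForm n ∧ Equiv G n

/-- The pathetic tiny `⧾∞ = {0 | {0 | ∞̄}}`. -/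
def tinyInf : AGame := .node [zero] [.node [zero] [.binf]]

/-- The pathetic miny `⧿∞ = {{∞ | 0} | 0}`. -/
def minyInf : AGame := .node [.node [.inf] [zero]] [zero]

end AGame

namespace AGame

theorem add'_inf_left (H : AGame) : add' .inf H = .inf := by
  rw [add']

theorem add'_inf_right (H : AGame) : add' H .inf = .inf := by
  cases H <;> rw [add'] <;> simp

theorem add'_binf_left (H : AGame) (h : H ≠ .inf) : add' .binf H = .binf := by
  cases H <;> first | (exact absurd rfl h) | (rw [add'] <;> simp)

theorem add'_binf_right (H : AGame) (h : H ≠ .inf) : add' H .binf = .binf := by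
  cases H <;> first | (exact absurd rfl h) | (rw [add'] <;> simp)

theorem neg_node (L R : List AGame) :
    neg (.node L R) = .node (R.map neg) (L.map neg) := by
  rw [neg]; simp

theorem add'_node (L R L' R' : List AGame) :
    add' (.node L R) (.node L' R') =
      .node ((L.map fun a => add' a (.node L' R')) ++ (L'.map fun b => add' (.node L R) b))
            ((R.map fun a => add' a (.node L' R')) ++ (R'.map fun b => add' (.node L R) b)) := by
  rw [add']; simp

theorem lf_node (L R : List AGame) : lf (.node L R) = true ↔ ∃ x ∈ L, ls x = true := by
  rw [lf]; simp

theorem ls_node (L R : List AGame) : ls (.node L R) = true ↔ ∀ x ∈ R, lf x = true := by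
  rw [ls]; simp

end AGame
namespace AGame

theorem bool_ext {a b : Bool} (h : (a = true) ↔ (b = true)) : a = b := by
  cases a <;> cases b <;> simp_all

theorem lf_inf : lf .inf = true := by rw [lf]
theorem lf_binf : lf .binf = false := by rw [lf]
theorem ls_inf : ls .inf = true := by rw [ls]
theorem ls_binf : ls .binf = false := by rw [ls]
theorem neg_inf : neg .inf = .binf := by rw [neg]
theorem neg_binf : neg .binf = .inf := by rw [neg]

theorem lf_node' (L R : List AGame) : lf (.node L R) = false ↔ ∀ x ∈ L, ls x = false := by
  rw [← Bool.not_eq_true, lf_node]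
  push_neg
  simp [Bool.not_eq_true]

theorem ls_node' (L R : List AGame) : ls (.node L R) = false ↔ ∃ x ∈ R, lf x = false := by
  rw [← Bool.not_eq_true, ls_node]
  push_neg
  simp [Bool.not_eq_true]

theorem sizeOf_mem_left {x : AGame} {L R : List AGame} (h : x ∈ L) :
    sizeOf x < sizeOf (AGame.node L R) := by
  have := List.sizeOf_lt_of_mem h
  simp only [AGame.node.sizeOf_spec]
  omega

theorem sizeOf_mem_right {x : AGame} {L R : List AGame} (h : x ∈ R) :
    sizeOf x < sizeOf (AGame.node L R) := by
  have := List.sizeOf_lt_of_mem h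
  simp only [AGame.node.sizeOf_spec]
  omega

theorem ind1 (motive : AGame → Prop)
    (h : ∀ A, (∀ C, sizeOf C < sizeOf A → motive C) → motive A) :
    ∀ A, motive A := by
  have key : ∀ n A, sizeOf A ≤ n → motive A := by
    intro n
    induction n with
    | zero => intro A hA; exact h A fun C hC => absurd (by omega) (by omega : ¬ sizeOf C < 0)
    | succ n ih => intro A hA; exact h A fun C hC => ih C (by omega)
  exact fun A => key _ A le_rfl

theorem ind2 (motive : AGame → AGame → Prop)
    (h : ∀ A B, (∀ C D, sizeOf C + sizeOf D < sizeOf A + sizeOf B → motive C D) → motive A B) :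
    ∀ A B, motive A B := by
  have key : ∀ n A B, sizeOf A + sizeOf B ≤ n → motive A B := by
    intro n
    induction n with
    | zero => intro A B hAB
              exact h A B fun C D hCD => absurd (by omega) (by omega : ¬ sizeOf C + sizeOf D < 0)
    | succ n ih => intro A B hAB; exact h A B fun C D hCD => ih C D (by omega)
  exact fun A B => key _ A B le_rfl

theorem ind3 (motive : AGame → AGame → AGame → Prop)
    (h : ∀ A B C, (∀ D E F, sizeOf D + sizeOf E + sizeOf F < sizeOf A + sizeOf B + sizeOf C →
      motive D E F) → motive A B C) : ∀ A B C, motive A B C := by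
  have key : ∀ n A B C, sizeOf A + sizeOf B + sizeOf C ≤ n → motive A B C := by
    intro n
    induction n with
    | zero => intro A B C hs
              exact h A B C fun D E F hDEF =>
                absurd (by omega) (by omega : ¬ sizeOf D + sizeOf E + sizeOf F < 0)
    | succ n ih => intro A B C hs; exact h A B C fun D E F hDEF => ih D E F (by omega)
  exact fun A B C => key _ A B C le_rfl

theorem neg_neg : ∀ G, neg (neg G) = G := by
  refine ind1 _ ?_
  intro G ih
  cases G with
  | inf => rw [neg_inf, neg_binf]
  | binf => rw [neg_binf, neg_inf]
  | node L R =>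
    rw [neg_node, neg_node, List.map_map, List.map_map]
    congr 1
    · exact (List.map_congr_left fun a ha => ih a (sizeOf_mem_left ha)).trans (List.map_id _)
    · exact (List.map_congr_left fun a ha => ih a (sizeOf_mem_right ha)).trans (List.map_id _)

theorem lf_ls_neg : ∀ G, lf (neg G) = !ls G ∧ ls (neg G) = !lf G := by
  refine ind1 _ ?_
  intro G ih
  cases G with
  | inf => rw [neg_inf]; exact ⟨by rw [lf_binf, ls_inf]; rfl, by rw [ls_binf, lf_inf]; rfl⟩
  | binf => rw [neg_binf]; exact ⟨by rw [lf_inf, ls_binf]; rfl, by rw [ls_inf, lf_binf]; rfl⟩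
  | node L R =>
    have key1 : lf (neg (node L R)) = true ↔ ∃ a ∈ R, lf a = false := by
      rw [neg_node, lf_node]
      constructor
      · rintro ⟨x, hx, hlsx⟩
        obtain ⟨a, ha, rfl⟩ := List.mem_map.1 hx
        refine ⟨a, ha, ?_⟩
        have h2 := (ih a (sizeOf_mem_right ha)).2
        rw [h2] at hlsx
        simpa using hlsx
      · rintro ⟨a, ha, hfa⟩
        refine ⟨neg a, List.mem_map.2 ⟨a, ha, rfl⟩, ?_⟩
        rw [(ih a (sizeOf_mem_right ha)).2, hfa]
        rfl
    have key2 : ls (neg (node L R)) = true ↔ ∀ a ∈ L, ls a = false := by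
      rw [neg_node, ls_node]
      constructor
      · intro h a ha
        have := h (neg a) (List.mem_map.2 ⟨a, ha, rfl⟩)
        rw [(ih a (sizeOf_mem_left ha)).1] at this
        simpa using this
      · intro h x hx
        obtain ⟨a, ha, rfl⟩ := List.mem_map.1 hx
        rw [(ih a (sizeOf_mem_left ha)).1, h a ha]
        rfl
    constructor
    · apply bool_ext
      rw [key1, Bool.not_eq_true', ls_node']
    · apply bool_ext
      rw [key2, Bool.not_eq_true', lf_node']

theorem lf_neg (G : AGame) : lf (neg G) = !ls G := (lf_ls_neg G).1
theorem ls_neg (G : AGame) : ls (neg G) = !lf G := (lf_ls_neg G).2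

theorem neg_ne_inf {G : AGame} (h : G ≠ .binf) : neg G ≠ .inf := by
  cases G with
  | inf => rw [neg_inf]; exact fun h' => by cases h'
  | binf => exact absurd rfl h
  | node L R => rw [neg_node]; exact fun h' => by cases h'

theorem neg_ne_binf {G : AGame} (h : G ≠ .inf) : neg G ≠ .binf := by
  cases G with
  | inf => exact absurd rfl h
  | binf => rw [neg_binf]; exact fun h' => by cases h'
  | node L R => rw [neg_node]; exact fun h' => by cases h'

theorem valid_add' : ∀ A B, Valid A → Valid B → Valid (add' A B) := by
  refine ind2 _ ?_
  intro A B ih hA hB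
  cases A with
  | inf => rw [add'_inf_left]; exact .inf
  | binf =>
    cases B with
    | inf => rw [add'_inf_right]; exact .inf
    | binf => rw [add'_binf_left _ (fun h => by cases h)]; exact .binf
    | node L R => rw [add'_binf_left _ (fun h => by cases h)]; exact .binf
  | node L R =>
    cases B with
    | inf => rw [add'_inf_right]; exact .inf
    | binf => rw [add'_binf_right _ (fun h => by cases h)]; exact .binf
    | node L' R' =>
      cases hA with | node hL0 hR0 hLv hRv =>
      cases hB with | node hL0' hR0' hLv' hRv' =>
      have hA' : Valid (node L R) := .node hL0 hR0 hLv hRv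
      have hB' : Valid (node L' R') := .node hL0' hR0' hLv' hRv'
      rw [add'_node]
      refine Valid.node ?_ ?_ ?_ ?_
      · simp [hL0]
      · simp [hR0]
      · intro g hg
        rcases List.mem_append.1 hg with h | h
        · obtain ⟨a, ha, rfl⟩ := List.mem_map.1 h
          exact ih a _ (by have := sizeOf_mem_left (R := R) ha; omega) (hLv a ha) hB'
        · obtain ⟨b, hb, rfl⟩ := List.mem_map.1 h
          exact ih _ b (by have := sizeOf_mem_left (R := R') hb; omega) hA' (hLv' b hb)
      · intro g hg
        rcases List.mem_append.1 hg with h | h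
        · obtain ⟨a, ha, rfl⟩ := List.mem_map.1 h
          exact ih a _ (by have := sizeOf_mem_right (L := L) ha; omega) (hRv a ha) hB'
        · obtain ⟨b, hb, rfl⟩ := List.mem_map.1 h
          exact ih _ b (by have := sizeOf_mem_right (L := L') hb; omega) hA' (hRv' b hb)

end AGame
namespace AGame

theorem neg_add' : ∀ A B, ¬(A = .inf ∧ B = .binf) → ¬(A = .binf ∧ B = .inf) →
    neg (add' A B) = add' (neg A) (neg B) := by
  refine ind2 _ ?_
  intro A B ih h1 h2
  cases A with
  | inf =>
    have hB : B ≠ .binf := fun h => h1 ⟨rfl, h⟩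
    rw [add'_inf_left, neg_inf, add'_binf_left _ (neg_ne_inf hB)]
  | binf =>
    have hB : B ≠ .inf := fun h => h2 ⟨rfl, h⟩
    rw [add'_binf_left _ hB, neg_binf, add'_inf_left]
  | node L R =>
    cases B with
    | inf => rw [add'_inf_right, neg_inf, neg_node,
        add'_binf_right _ (fun h => by cases h)]
    | binf => rw [add'_binf_right _ (fun h => by cases h), neg_binf, neg_node,
        add'_inf_right]
    | node L' R' =>
      rw [add'_node, neg_node, neg_node (L := L), neg_node (L := L'), add'_node]
      congr 1
      · rw [List.map_append, List.map_map, List.map_map, List.map_map, List.map_map]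
        congr 1
        · refine List.map_congr_left fun a ha => ?_
          show neg (add' a (node L' R')) = add' (neg a) (node (R'.map neg) (L'.map neg))
          rw [ih a _ (by have := sizeOf_mem_right (L := L) ha; omega)
              (fun h => by cases h.2) (fun h => by cases h.2), neg_node]
        · refine List.map_congr_left fun b hb => ?_
          show neg (add' (node L R) b) = add' (node (R.map neg) (L.map neg)) (neg b)
          rw [ih _ b (by have := sizeOf_mem_right (L := L') hb; omega)
              (fun h => by cases h.1) (fun h => by cases h.1), neg_node]
      · rw [List.map_append, List.map_map, List.map_map, List.map_map, List.map_map]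
        congr 1
        · refine List.map_congr_left fun a ha => ?_
          show neg (add' a (node L' R')) = add' (neg a) (node (R'.map neg) (L'.map neg))
          rw [ih a _ (by have := sizeOf_mem_left (R := R) ha; omega)
              (fun h => by cases h.2) (fun h => by cases h.2), neg_node]
        · refine List.map_congr_left fun b hb => ?_
          show neg (add' (node L R) b) = add' (node (R.map neg) (L.map neg)) (neg b)
          rw [ih _ b (by have := sizeOf_mem_left (R := R') hb; omega)
              (fun h => by cases h.1) (fun h => by cases h.1), neg_node]

theorem add'_ne_inf : ∀ {A B : AGame}, A ≠ .inf → B ≠ .inf → add' A B ≠ .inf := by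
  intro A B hA hB
  cases A with
  | inf => exact absurd rfl hA
  | binf => rw [add'_binf_left _ hB]; exact fun h => by cases h
  | node L R =>
    cases B with
    | inf => exact absurd rfl hB
    | binf => rw [add'_binf_right _ hA]; exact fun h => by cases h
    | node L' R' => rw [add'_node]; exact fun h => by cases h

theorem add'_assoc : ∀ A B C, add' (add' A B) C = add' A (add' B C) := by
  refine ind3 _ ?_
  intro A B C ih
  by_cases hA : A = .inf
  · subst hA; rw [add'_inf_left, add'_inf_left, add'_inf_left]
  by_cases hB : B = .inf
  · subst hB; rw [add'_inf_right, add'_inf_left, add'_inf_right]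
  by_cases hC : C = .inf
  · subst hC; rw [add'_inf_right, add'_inf_right, add'_inf_right]
  by_cases hA2 : A = .binf
  · subst hA2
    rw [add'_binf_left _ hB, add'_binf_left _ hC, add'_binf_left _ (add'_ne_inf hB hC)]
  by_cases hB2 : B = .binf
  · subst hB2
    have e1 : add' A .binf = .binf := add'_binf_right _ hA
    have e2 : add' .binf C = .binf := add'_binf_left _ hC
    rw [e1, e2, e1]
  by_cases hC2 : C = .binf
  · subst hC2
    have e1 : add' B .binf = .binf := add'_binf_right _ hB
    have e2 : add' A .binf = .binf := add'_binf_right _ hA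
    have e3 : add' (add' A B) .binf = .binf := add'_binf_right _ (add'_ne_inf hA hB)
    rw [e3, e1, e2]
  obtain ⟨LA, RA, rfl⟩ : ∃ L R, A = node L R := by
    cases A with
    | inf => exact absurd rfl hA
    | binf => exact absurd rfl hA2
    | node L R => exact ⟨L, R, rfl⟩
  obtain ⟨LB, RB, rfl⟩ : ∃ L R, B = node L R := by
    cases B with
    | inf => exact absurd rfl hB
    | binf => exact absurd rfl hB2
    | node L R => exact ⟨L, R, rfl⟩
  obtain ⟨LC, RC, rfl⟩ : ∃ L R, C = node L R := by
    cases C with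
    | inf => exact absurd rfl hC
    | binf => exact absurd rfl hC2
    | node L R => exact ⟨L, R, rfl⟩
  have hE := add'_node LA RA LB RB
  have hD := add'_node LB RB LC RC
  rw [hE, hD, add'_node, add'_node]
  simp only [← hE, ← hD, List.map_append, List.map_map, List.append_assoc]
  congr 1
  · congr 1
    · refine List.map_congr_left fun a ha => ?_
      exact ih a (node LB RB) (node LC RC) (by have := sizeOf_mem_left (R := RA) ha; omega)
    congr 1
    · refine List.map_congr_left fun b hb => ?_
      exact ih (node LA RA) b (node LC RC) (by have := sizeOf_mem_left (R := RB) hb; omega)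
    · refine List.map_congr_left fun c hc => ?_
      exact ih (node LA RA) (node LB RB) c (by have := sizeOf_mem_left (R := RC) hc; omega)
  · congr 1
    · refine List.map_congr_left fun a ha => ?_
      exact ih a (node LB RB) (node LC RC) (by have := sizeOf_mem_right (L := LA) ha; omega)
    congr 1
    · refine List.map_congr_left fun b hb => ?_
      exact ih (node LA RA) b (node LC RC) (by have := sizeOf_mem_right (L := LB) hb; omega)
    · refine List.map_congr_left fun c hc => ?_
      exact ih (node LA RA) (node LB RB) c (by have := sizeOf_mem_right (L := LC) hc; omega)

end AGame
namespace AGame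

theorem lf_ls_comm : ∀ A B, lf (add' A B) = lf (add' B A) ∧ ls (add' A B) = ls (add' B A) := by
  refine ind2 _ ?_
  intro A B ih
  cases A with
  | inf => rw [add'_inf_left, add'_inf_right]; exact ⟨rfl, rfl⟩
  | binf =>
    cases B with
    | inf => rw [add'_inf_left, add'_inf_right]; exact ⟨rfl, rfl⟩
    | binf => exact ⟨rfl, rfl⟩
    | node L R =>
      rw [add'_binf_left _ (fun h => by cases h), add'_binf_right _ (fun h => by cases h)]
      exact ⟨rfl, rfl⟩
  | node L R =>
    cases B with
    | inf => rw [add'_inf_left, add'_inf_right]; exact ⟨rfl, rfl⟩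
    | binf =>
      rw [add'_binf_left _ (fun h => by cases h), add'_binf_right _ (fun h => by cases h)]
      exact ⟨rfl, rfl⟩
    | node L' R' =>
      have ih1 : ∀ a ∈ L, ls (add' a (node L' R')) = ls (add' (node L' R') a) :=
        fun a ha => (ih a (node L' R') (by have := sizeOf_mem_left (R := R) ha; omega)).2
      have ih2 : ∀ b ∈ L', ls (add' (node L R) b) = ls (add' b (node L R)) :=
        fun b hb => (ih (node L R) b (by have := sizeOf_mem_left (R := R') hb; omega)).2
      have ih3 : ∀ a ∈ R, lf (add' a (node L' R')) = lf (add' (node L' R') a) :=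
        fun a ha => (ih a (node L' R') (by have := sizeOf_mem_right (L := L) ha; omega)).1
      have ih4 : ∀ b ∈ R', lf (add' (node L R) b) = lf (add' b (node L R)) :=
        fun b hb => (ih (node L R) b (by have := sizeOf_mem_right (L := L') hb; omega)).1
      constructor
      · apply bool_ext
        rw [add'_node, add'_node, lf_node, lf_node]
        simp only [List.mem_append, List.mem_map]
        constructor
        · rintro ⟨x, hx | hx, hlsx⟩
          · obtain ⟨a, ha, rfl⟩ := hx
            exact ⟨_, Or.inr ⟨a, ha, rfl⟩, by rw [← ih1 a ha]; exact hlsx⟩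
          · obtain ⟨b, hb, rfl⟩ := hx
            exact ⟨_, Or.inl ⟨b, hb, rfl⟩, by rw [← ih2 b hb]; exact hlsx⟩
        · rintro ⟨x, hx | hx, hlsx⟩
          · obtain ⟨b, hb, rfl⟩ := hx
            exact ⟨_, Or.inr ⟨b, hb, rfl⟩, by rw [ih2 b hb]; exact hlsx⟩
          · obtain ⟨a, ha, rfl⟩ := hx
            exact ⟨_, Or.inl ⟨a, ha, rfl⟩, by rw [ih1 a ha]; exact hlsx⟩
      · apply bool_ext
        rw [add'_node, add'_node, ls_node, ls_node]
        simp only [List.mem_append, List.mem_map]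
        constructor
        · rintro h x (hx | hx)
          · obtain ⟨b, hb, rfl⟩ := hx
            rw [← ih4 b hb]; exact h _ (Or.inr ⟨b, hb, rfl⟩)
          · obtain ⟨a, ha, rfl⟩ := hx
            rw [← ih3 a ha]; exact h _ (Or.inl ⟨a, ha, rfl⟩)
        · rintro h x (hx | hx)
          · obtain ⟨a, ha, rfl⟩ := hx
            rw [ih3 a ha]; exact h _ (Or.inr ⟨a, ha, rfl⟩)
          · obtain ⟨b, hb, rfl⟩ := hx
            rw [ih4 b hb]; exact h _ (Or.inl ⟨b, hb, rfl⟩)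

theorem zero_out : ∀ X, Valid X → lf (add' zero X) = lf X ∧ ls (add' zero X) = ls X := by
  refine ind1 (motive := fun X => Valid X → _ ∧ _) ?_
  intro X ih hX
  cases X with
  | inf => rw [add'_inf_right]; exact ⟨rfl, rfl⟩
  | binf => rw [add'_binf_right _ (fun h => by cases h)]; exact ⟨rfl, rfl⟩
  | node P Q =>
    cases hX with | node hP0 hQ0 hPv hQv =>
    have eb : add' AGame.binf (node P Q) = .binf := add'_binf_left _ (fun h => by cases h)
    have ei : add' AGame.inf (node P Q) = .inf := add'_inf_left _
    rw [show zero = node [.binf] [.inf] from rfl, add'_node]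
    simp only [List.map_cons, List.map_nil, List.singleton_append, eb, ei]
    constructor
    · apply bool_ext
      rw [lf_node, lf_node]
      constructor
      · rintro ⟨x, hx, hlsx⟩
        rcases List.mem_cons.1 hx with rfl | hx
        · rw [ls_binf] at hlsx; cases hlsx
        · obtain ⟨p, hp, rfl⟩ := List.mem_map.1 hx
          refine ⟨p, hp, ?_⟩
          rw [← (ih p (sizeOf_mem_left hp) (hPv p hp)).2]
          exact hlsx
      · rintro ⟨p, hp, hlsp⟩
        refine ⟨add' (node [.binf] [.inf]) p, List.mem_cons_of_mem _ (List.mem_map.2 ⟨p, hp, rfl⟩), ?_⟩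
        rw [show node [AGame.binf] [AGame.inf] = zero from rfl,
            (ih p (sizeOf_mem_left hp) (hPv p hp)).2]
        exact hlsp
    · apply bool_ext
      rw [ls_node, ls_node]
      constructor
      · intro h q hq
        have := h (add' (node [.binf] [.inf]) q) (List.mem_cons_of_mem _ (List.mem_map.2 ⟨q, hq, rfl⟩))
        rw [show node [AGame.binf] [AGame.inf] = zero from rfl,
            (ih q (sizeOf_mem_right hq) (hQv q hq)).1] at this
        exact this
      · intro h x hx
        rcases List.mem_cons.1 hx with rfl | hx
        · exact lf_inf
        · obtain ⟨q, hq, rfl⟩ := List.mem_map.1 hx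
          rw [show node [AGame.binf] [AGame.inf] = zero from rfl,
              (ih q (sizeOf_mem_right hq) (hQv q hq)).1]
          exact h q hq

theorem zero_out_right (X : AGame) (h : Valid X) :
    lf (add' X zero) = lf X ∧ ls (add' X zero) = ls X := by
  obtain ⟨c1, c2⟩ := lf_ls_comm X zero
  obtain ⟨z1, z2⟩ := zero_out X h
  exact ⟨c1.trans z1, c2.trans z2⟩

end AGame
namespace AGame

def NC (G : AGame) : Prop := ∀ H, Follower H G → ¬ IsCheck H

theorem NC_left {L R : List AGame} (h : NC (.node L R)) {a} (ha : a ∈ L) : NC a :=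
  fun H hH => h H (.left ha hH)
theorem NC_right {L R : List AGame} (h : NC (.node L R)) {a} (ha : a ∈ R) : NC a :=
  fun H hH => h H (.right ha hH)
theorem NC_self {L R : List AGame} (h : NC (.node L R)) : .inf ∉ L ∧ .binf ∉ R := by
  have := h _ (Follower.refl (.node L R))
  exact ⟨fun hh => this (Or.inl hh), fun hh => this (Or.inr hh)⟩

theorem mirror : ∀ G X, Valid G → Valid X → NC G → G ≠ .inf → G ≠ .binf →
    lf (add' (add' G (neg G)) X) = lf X ∧ ls (add' (add' G (neg G)) X) = ls X := by
  refine ind2 (motive := fun G X => Valid G → Valid X → NC G → G ≠ .inf → G ≠ .binf → _ ∧ _) ?_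
  intro G X ih hGv hXv hnc hGi hGb
  obtain ⟨L, R, rfl⟩ : ∃ L R, G = node L R := by
    cases G with
    | inf => exact absurd rfl hGi
    | binf => exact absurd rfl hGb
    | node L R => exact ⟨L, R, rfl⟩
  cases hGv with | node hL0 hR0 hLv hRv =>
  have hGv' : Valid (node L R) := .node hL0 hR0 hLv hRv
  obtain ⟨hiL, hbR⟩ := NC_self hnc
  cases X with
  | inf => rw [add'_inf_right]; exact ⟨rfl, rfl⟩
  | binf =>
    rw [neg_node, add'_node, add'_binf_right _ (fun h => by cases h)]
    exact ⟨rfl, rfl⟩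
  | node P Q =>
    cases hXv with | node hP0 hQ0 hPv hQv =>
    have hXv' : Valid (node P Q) := .node hP0 hQ0 hPv hQv
    have IHX : ∀ x, x ∈ P ∨ x ∈ Q → Valid x →
        lf (add' (add' (node L R) (neg (node L R))) x) = lf x ∧
        ls (add' (add' (node L R) (neg (node L R))) x) = ls x := by
      intro x hx hxv
      refine ih (node L R) x ?_ hGv' hxv hnc hGi hGb
      rcases hx with hx | hx
      · have := sizeOf_mem_left (R := Q) hx; omega
      · have := sizeOf_mem_right (L := P) hx; omega
    have IHG : ∀ a, sizeOf a < sizeOf (node L R) → Valid a → NC a → a ≠ .inf → a ≠ .binf →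
        lf (add' (add' a (neg a)) (node P Q)) = lf (node P Q) ∧
        ls (add' (add' a (neg a)) (node P Q)) = ls (node P Q) :=
      fun a hs hv hn h1 h2 => ih a (node P Q) (by omega) hv hXv' hn h1 h2
    constructor
    -- lf goal
    · apply bool_ext
      rw [neg_node, add'_node, add'_node, lf_node, lf_node]
      simp only [List.mem_append, List.mem_map]
      constructor
      · rintro ⟨x, ⟨a, ⟨a1, ha1, rfl⟩ | ⟨a1, ⟨c, hc, rfl⟩, rfl⟩, rfl⟩ | ⟨p, hp, rfl⟩, hlsx⟩
        -- Left moved in G to a1 ∈ L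
        · cases a1 with
          | inf => exact absurd ha1 hiL
          | binf =>
            rw [add'_binf_left _ (fun h => by cases h),
                add'_binf_left _ (fun h => by cases h), ls_binf] at hlsx
            cases hlsx
          | node La Ra =>
            -- Right mirrors to (a1 + neg a1) + X, with lf = lf X; but ls hlsx forces it true
            rw [add'_node, add'_node, ] at hlsx
            have hmem : add' (add' (node La Ra) (neg (node La Ra))) (node P Q) ∈
                (List.map (fun s => add' s (node P Q))
                  (List.map (fun a => add' a (node (List.map neg R) (List.map neg L))) Ra ++
                   List.map (fun b => add' (node La Ra) b) (List.map neg L)) ++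
                 List.map (fun b => add' (node
                   (List.map (fun a => add' a (node (List.map neg R) (List.map neg L))) La ++
                    List.map (fun b => add' (node La Ra) b) (List.map neg R))
                   (List.map (fun a => add' a (node (List.map neg R) (List.map neg L))) Ra ++
                    List.map (fun b => add' (node La Ra) b) (List.map neg L))) b) Q) := by
              refine List.mem_append.2 (Or.inl (List.mem_map.2 ⟨add' (node La Ra) (neg (node La Ra)), ?_, rfl⟩))
              exact List.mem_append.2 (Or.inr (List.mem_map.2 ⟨neg (node La Ra),
                List.mem_map.2 ⟨node La Ra, ha1, rfl⟩, rfl⟩))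
            have hlf := (ls_node _ _).1 hlsx _ hmem
            rw [(IHG (node La Ra) (sizeOf_mem_left ha1) (hLv _ ha1) (NC_left hnc ha1)
                (fun h => by cases h) (fun h => by cases h)).1, lf_node] at hlf
            exact hlf
        -- Left moved in -G to neg c, c ∈ R
        · cases c with
          | binf => exact absurd hc hbR
          | inf =>
            rw [neg_inf, add'_binf_right _ (fun h => by cases h),
                add'_binf_left _ (fun h => by cases h), ls_binf] at hlsx
            cases hlsx
          | node Lc Rc =>
            rw [neg_node (L := Lc), add'_node (L := L), add'_node] at hlsx
            have hmem : add' (add' (node Lc Rc) (node (List.map neg Rc) (List.map neg Lc)))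
                (node P Q) ∈
                (List.map (fun s => add' s (node P Q))
                  (List.map (fun a => add' a (node (List.map neg Rc) (List.map neg Lc))) R ++
                   List.map (fun b => add' (node L R) b) (List.map neg Lc)) ++
                 List.map (fun b => add' (node
                   (List.map (fun a => add' a (node (List.map neg Rc) (List.map neg Lc))) L ++
                    List.map (fun b => add' (node L R) b) (List.map neg Rc))
                   (List.map (fun a => add' a (node (List.map neg Rc) (List.map neg Lc))) R ++
                    List.map (fun b => add' (node L R) b) (List.map neg Lc))) b) Q) := by
              refine List.mem_append.2 (Or.inl (List.mem_map.2
                ⟨add' (node Lc Rc) (node (List.map neg Rc) (List.map neg Lc)), ?_, rfl⟩))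
              exact List.mem_append.2 (Or.inl (List.mem_map.2 ⟨node Lc Rc, hc, rfl⟩))
            have hlf := (ls_node _ _).1 hlsx _ hmem
            rw [← neg_node] at hlf
            rw [(IHG (node Lc Rc) (sizeOf_mem_right hc) (hRv _ hc) (NC_right hnc hc)
                (fun h => by cases h) (fun h => by cases h)).1, lf_node] at hlf
            exact hlf
        -- Left moved in X to p ∈ P
        · have := (IHX p (Or.inl hp) (hPv p hp)).2
          rw [neg_node, add'_node] at this
          rw [this] at hlsx
          exact ⟨p, hp, hlsx⟩
      · rintro ⟨p, hp, hlsp⟩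
        refine ⟨_, Or.inr ⟨p, hp, rfl⟩, ?_⟩
        have := (IHX p (Or.inl hp) (hPv p hp)).2
        rw [neg_node, add'_node] at this
        rw [this]
        exact hlsp
    -- ls goal
    · apply bool_ext
      rw [neg_node, add'_node, add'_node, ls_node, ls_node]
      simp only [List.mem_append, List.mem_map]
      constructor
      · intro h y hy
        have h1 := h _ (Or.inr ⟨y, hy, rfl⟩)
        have := (IHX y (Or.inr hy) (hQv y hy)).1
        rw [neg_node, add'_node] at this
        rw [this] at h1
        exact h1
      · rintro h x (⟨a, ⟨a1, ha1, rfl⟩ | ⟨a1, ⟨c, hc, rfl⟩, rfl⟩, rfl⟩ | ⟨y, hy, rfl⟩)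
        -- Right moved in G to a1 ∈ R
        · cases a1 with
          | binf => exact absurd ha1 hbR
          | inf =>
            rw [add'_inf_left, add'_inf_left, lf_inf]
          | node La Ra =>
            rw [add'_node, add'_node]
            apply (lf_node _ _).2
            refine ⟨add' (add' (node La Ra) (neg (node La Ra))) (node P Q),
              List.mem_append.2 (Or.inl (List.mem_map.2
                ⟨add' (node La Ra) (neg (node La Ra)), ?_, rfl⟩)), ?_⟩
            · exact List.mem_append.2 (Or.inr (List.mem_map.2 ⟨neg (node La Ra),
                List.mem_map.2 ⟨node La Ra, ha1, rfl⟩, rfl⟩))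
            · rw [(IHG (node La Ra) (sizeOf_mem_right ha1) (hRv _ ha1) (NC_right hnc ha1)
                  (fun hh => by cases hh) (fun hh => by cases hh)).2, ls_node]
              exact h
        -- Right moved in -G to neg c, c ∈ L
        · cases c with
          | inf => exact absurd hc hiL
          | binf =>
            rw [neg_binf, add'_inf_right, add'_inf_left, lf_inf]
          | node Lc Rc =>
            rw [neg_node (L := Lc), add'_node (L := L), add'_node]
            apply (lf_node _ _).2
            refine ⟨add' (add' (node Lc Rc) (node (List.map neg Rc) (List.map neg Lc))) (node P Q),
              List.mem_append.2 (Or.inl (List.mem_map.2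
                ⟨add' (node Lc Rc) (node (List.map neg Rc) (List.map neg Lc)), ?_, rfl⟩)), ?_⟩
            · exact List.mem_append.2 (Or.inl (List.mem_map.2 ⟨node Lc Rc, hc, rfl⟩))
            · rw [← neg_node,
                (IHG (node Lc Rc) (sizeOf_mem_left hc) (hLv _ hc) (NC_left hnc hc)
                  (fun hh => by cases hh) (fun hh => by cases hh)).2, ls_node]
              exact h
        -- Right moved in X to y ∈ Q
        · have := (IHX y (Or.inr hy) (hQv y hy)).1
          rw [neg_node, add'_node] at this
          rw [this]
          exact h y hy

end AGame
namespace AGame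

theorem valid_neg : ∀ G, Valid G → Valid (neg G) := by
  refine ind1 (motive := fun G => Valid G → Valid (neg G)) ?_
  intro G ih hG
  cases G with
  | inf => rw [neg_inf]; exact .binf
  | binf => rw [neg_binf]; exact .inf
  | node L R =>
    cases hG with | node hL0 hR0 hLv hRv =>
    rw [neg_node]
    refine .node (by simp [hR0]) (by simp [hL0]) ?_ ?_
    · intro g hg; obtain ⟨a, ha, rfl⟩ := List.mem_map.1 hg
      exact ih a (sizeOf_mem_right ha) (hRv a ha)
    · intro g hg; obtain ⟨a, ha, rfl⟩ := List.mem_map.1 hg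
      exact ih a (sizeOf_mem_left ha) (hLv a ha)

theorem valid_zero : Valid zero := by
  refine .node (by simp [zero]) (by simp [zero]) ?_ ?_
  · intro g hg; rw [List.mem_singleton] at hg; subst hg; exact .binf
  · intro g hg; rw [List.mem_singleton] at hg; subst hg; exact .inf

theorem zero_ne_inf : zero ≠ .inf := fun h => by cases h
theorem zero_ne_binf : zero ≠ .binf := fun h => by cases h

theorem lf_zero : lf zero = false := by
  rw [show zero = node [.binf] [.inf] from rfl]
  refine (lf_node' _ _).2 ?_
  intro x hx; rw [List.mem_singleton] at hx; subst hx; exact ls_binf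

theorem ls_zero : ls zero = true := by
  rw [show zero = node [.binf] [.inf] from rfl]
  refine (ls_node _ _).2 ?_
  intro x hx; rw [List.mem_singleton] at hx; subst hx; exact lf_inf

theorem outcome_comm (A B : AGame) : outcome (add' A B) = outcome (add' B A) := by
  unfold outcome
  rw [(lf_ls_comm A B).1, (lf_ls_comm A B).2]

theorem add'_nodes_ne_inf {L R L' R' : List AGame} :
    add' (.node L R) (.node L' R') ≠ .inf := by
  rw [add'_node]; exact fun h => by cases h

theorem add'_nodes_ne_binf {L R L' R' : List AGame} :
    add' (.node L R) (.node L' R') ≠ .binf := by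
  rw [add'_node]; exact fun h => by cases h

theorem part1 : ∀ G, Valid G → ConwayForm G → Equiv (add' G (neg G)) zero := by
  intro G hG hCF X hXv hX1 hX2
  obtain ⟨h1, h2, h3⟩ := hCF
  have m := mirror G X hG hXv h3 h1 h2
  have z := zero_out X hXv
  unfold outcome
  rw [m.1, m.2, z.1, z.2]

theorem conway_add_neg_eq_zero' :
    (∀ G, Valid G → ConwayForm G → Equiv (add' G (neg G)) zero) ∧
    (∀ G, Valid G → ConwayGame G → Equiv (add' G (neg G)) zero) := by
  refine ⟨part1, ?_⟩
  intro G hG hCG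
  obtain ⟨G', hG'v, hCF', hEq⟩ := hCG
  have E' : Equiv (add' G' (neg G')) zero := part1 G' hG'v hCF'
  obtain ⟨hg1, hg2, hg3⟩ := hCF'
  obtain ⟨L', R', rfl⟩ : ∃ L R, G' = node L R := by
    cases G' with
    | inf => exact absurd rfl hg1
    | binf => exact absurd rfl hg2
    | node L R => exact ⟨L, R, rfl⟩
  -- the value of G' + (-G') + zero is P
  have hPval : outcome (add' (add' (node L' R') (neg (node L' R'))) zero) = (false, true) := by
    have := E' zero valid_zero zero_ne_inf zero_ne_binf
    rw [this]
    unfold outcome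
    rw [(zero_out zero valid_zero).1, (zero_out zero valid_zero).2, lf_zero, ls_zero]
  -- G is not inf or binf
  have hGne : G ≠ .inf ∧ G ≠ .binf := by
    have hX0v : Valid (add' (neg (node L' R')) zero) :=
      valid_add' _ _ (valid_neg _ hG'v) valid_zero
    have hX0i : add' (neg (node L' R')) zero ≠ .inf := by rw [neg_node]; exact add'_nodes_ne_inf
    have hX0b : add' (neg (node L' R')) zero ≠ .binf := by rw [neg_node]; exact add'_nodes_ne_binf
    have key := hEq _ hX0v hX0i hX0b
    rw [add'_assoc] at hPval
    rw [hPval] at key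
    constructor
    · rintro rfl
      rw [add'_inf_left] at key
      unfold outcome at key
      rw [lf_inf, ls_inf] at key
      cases key
    · rintro rfl
      rw [add'_binf_left _ hX0i] at key
      unfold outcome at key
      rw [lf_binf, ls_binf] at key
      cases key
  obtain ⟨Lg, Rg, rfl⟩ : ∃ L R, G = node L R := by
    cases G with
    | inf => exact absurd rfl hGne.1
    | binf => exact absurd rfl hGne.2
    | node L R => exact ⟨L, R, rfl⟩
  -- conjugate equivalence
  have negEq : Equiv (neg (node Lg Rg)) (neg (node L' R')) := by
    intro X hXv hX1 hX2
    have e1 : neg (add' (node Lg Rg) (neg X)) = add' (neg (node Lg Rg)) X := by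
      rw [neg_add' _ _ (fun h => by cases h.1) (fun h => by cases h.1), neg_neg]
    have e2 : neg (add' (node L' R') (neg X)) = add' (neg (node L' R')) X := by
      rw [neg_add' _ _ (fun h => by cases h.1) (fun h => by cases h.1), neg_neg]
    have key := hEq (neg X) (valid_neg _ hXv) (neg_ne_inf hX2) (neg_ne_binf hX1)
    unfold outcome at key ⊢
    have k1 := congrArg Prod.fst key
    have k2 := congrArg Prod.snd key
    simp only at k1 k2
    rw [← e1, ← e2, lf_neg, lf_neg, ls_neg, ls_neg, k1, k2]
  -- final chain
  intro X hXv hX1 hX2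
  obtain ⟨Lx, Rx, rfl⟩ : ∃ L R, X = node L R := by
    cases X with
    | inf => exact absurd rfl hX1
    | binf => exact absurd rfl hX2
    | node L R => exact ⟨L, R, rfl⟩
  have s1 : outcome (add' (add' (node Lg Rg) (neg (node Lg Rg))) (node Lx Rx)) =
      outcome (add' (node Lg Rg) (add' (neg (node Lg Rg)) (node Lx Rx))) := by
    rw [add'_assoc]
  have hW1v : Valid (add' (neg (node Lg Rg)) (node Lx Rx)) :=
    valid_add' _ _ (valid_neg _ hG) hXv
  have hW1i : add' (neg (node Lg Rg)) (node Lx Rx) ≠ .inf := by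
    rw [neg_node]; exact add'_nodes_ne_inf
  have hW1b : add' (neg (node Lg Rg)) (node Lx Rx) ≠ .binf := by
    rw [neg_node]; exact add'_nodes_ne_binf
  have s2 := hEq _ hW1v hW1i hW1b
  have hW2v : Valid (add' (node Lx Rx) (node L' R')) := valid_add' _ _ hXv hG'v
  have s3 := negEq _ hW2v add'_nodes_ne_inf add'_nodes_ne_binf
  calc outcome (add' (add' (node Lg Rg) (neg (node Lg Rg))) (node Lx Rx))
      = outcome (add' (node Lg Rg) (add' (neg (node Lg Rg)) (node Lx Rx))) := s1
    _ = outcome (add' (node L' R') (add' (neg (node Lg Rg)) (node Lx Rx))) := s2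
    _ = outcome (add' (add' (neg (node Lg Rg)) (node Lx Rx)) (node L' R')) := outcome_comm _ _
    _ = outcome (add' (neg (node Lg Rg)) (add' (node Lx Rx) (node L' R'))) := by rw [add'_assoc]
    _ = outcome (add' (neg (node L' R')) (add' (node Lx Rx) (node L' R'))) := s3
    _ = outcome (add' (add' (node Lx Rx) (node L' R')) (neg (node L' R'))) := outcome_comm _ _
    _ = outcome (add' (node Lx Rx) (add' (node L' R') (neg (node L' R')))) := by rw [add'_assoc]
    _ = outcome (add' (add' (node L' R') (neg (node L' R'))) (node Lx Rx)) := outcome_comm _ _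
    _ = outcome (add' zero (node Lx Rx)) := E' _ hXv hX1 hX2

end AGame

namespace AGame
/-- For Conway forms, `G + (-G) = 0`; in particular every Conway game is
invertible with inverse its conjugate. -/
theorem conway_add_neg_eq_zero :
    (∀ G, Valid G → ConwayForm G → Equiv (add' G (neg G)) zero) ∧
    (∀ G, Valid G → ConwayGame G → Equiv (add' G (neg G)) zero) := by
  exact conway_add_neg_eq_zero'
end AGame
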